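/- Let φ be a k̄-wise uniform density on {-1,1}^n with k̄ even, and let x, y be independent samples from φ. Then Pr[|∑_{i=1}^n x_i y_i| > t√n] ≤ k̄^{k̄/2}/t^{k̄}. -/

import Mathlib

open Finset

noncomputable def sgn (b : Bool) : ℝ := if b then 1 else -1

noncomputable def chi {n : ℕ} (S : Finset (Fin n)) (x : Fin n → Bool) : ℝ :=
  ∏ i ∈ S, sgn (x i)

/-- Expectation under the uniform distribution on `{-1,1}^n`. -/
noncomputable def expect {n : ℕ} (f : (Fin n → Bool) → ℝ) : ℝ :=
  (∑ x : Fin n → Bool, f x) / 2 ^ n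

/-- Fourier coefficient `f̂(S) = E_x[f(x) x^S]`. -/
noncomputable def coeff {n : ℕ} (f : (Fin n → Bool) → ℝ) (S : Finset (Fin n)) : ℝ :=
  expect (fun x => f x * chi S x)

/-- A density function: nonnegative with mean 1 under the uniform measure. -/
def IsDensity {n : ℕ} (φ : (Fin n → Bool) → ℝ) : Prop :=
  (∀ x, 0 ≤ φ x) ∧ expect φ = 1

/-- Total variation distance between densities: `(1/2) E_x |φ - ψ|`. -/
noncomputable def dTV {n : ℕ} (φ ψ : (Fin n → Bool) → ℝ) : ℝ :=
  expect (fun x => |φ x - ψ x|) / 2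

/-- The nonempty sets of size at most `k`. -/
noncomputable def lowSets (n k : ℕ) : Finset (Finset (Fin n)) :=
  Finset.univ.filter fun S => 1 ≤ S.card ∧ S.card ≤ k

/-!
Expanding `(∑ i, x_i y_i)^k` over words `p : Fin k → Fin n` gives
`∑_p χ_{S(p)}(x) χ_{S(p)}(y)`, where `S(p)` is the set of letters occurring an odd number of
times in `p`. Since `1 ≤ |S(p)| ≤ k` unless `S(p) = ∅`, `k`-wise uniformity kills every term with
`S(p) ≠ ∅`, so under `φ ⊗ φ` the `k`-th moment is the number of words in which every letter
occurs an even number of times (exactly as for uniform `x, y`). For `k = 2m` that number is at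
most `(2m n)^m`: pairing the first letter with a later copy of itself reduces to length `2m - 2`.
Markov's inequality for the `k`-th moment then gives the bound.
-/

lemma card_filter_eq_succAbove {α : Type*} [DecidableEq α] {k : ℕ} (q : Fin (k + 1) → α)
    (j : Fin (k + 1)) (v : α) :
    #{i | q i = v} = (if q j = v then 1 else 0) + #{i | q (j.succAbove i) = v} := by
  simp only [card_filter]
  exact Fin.sum_univ_succAbove _ j

def evenFiberMaps (k : ℕ) (α : Type*) [Fintype α] [DecidableEq α] : Finset (Fin k → α) :=
  {p | ∀ v, Even #{j | p j = v}}

section Fibers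

variable {α : Type*} [Fintype α] [DecidableEq α]

lemma exists_succ_eq_apply_zero {k : ℕ} {p : Fin (k + 2) → α}
    (hp : p ∈ evenFiberMaps (k + 2) α) : ∃ j : Fin (k + 1), p j.succ = p 0 := by
  by_contra! h
  have hfiber : #{i | p i = p 0} = 1 := by
    rw [card_filter_eq_succAbove p 0, if_pos rfl, add_eq_left, card_eq_zero,
      filter_eq_empty_iff]
    exact fun j _ => h j
  have := (mem_filter.mp hp).2 (p 0)
  rw [hfiber] at this
  exact Nat.not_even_one this

lemma evenFiberMaps_add_two_subset (k : ℕ) :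
    evenFiberMaps (k + 2) α ⊆ (univ ×ˢ univ ×ˢ evenFiberMaps k α).image
      fun x : Fin (k + 1) × α × (Fin k → α) => Fin.cons x.2.1 (Fin.insertNth x.1 x.2.1 x.2.2) := by
  intro p hp
  obtain ⟨j, hj⟩ := exists_succ_eq_apply_zero hp
  refine mem_image.mpr ⟨(j, p 0, Fin.removeNth j (Fin.tail p)), ?_, ?_⟩
  · simp only [evenFiberMaps, mem_product, mem_univ, mem_filter, true_and] at hp ⊢
    intro v
    have h0 : #{i | p i = v} = (if p 0 = v then 1 else 0) + #{i | Fin.tail p i = v} :=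
      Fin.card_filter_univ_succ' _
    have h1 : #{i | Fin.tail p i = v} =
        (if p 0 = v then 1 else 0) + #{i | Fin.removeNth j (Fin.tail p) i = v} := by
      rw [← hj]
      exact card_filter_eq_succAbove _ j v
    obtain ⟨c, hc⟩ := hp v
    rw [Nat.even_iff]
    omega
  · have hj : Fin.tail p j = p 0 := hj
    calc Fin.cons (p 0) (Fin.insertNth j (p 0) (Fin.removeNth j (Fin.tail p)))
        = Fin.cons (p 0) (Fin.tail p) := by rw [← hj, Fin.insertNth_self_removeNth]
      _ = p := Fin.cons_self_tail p

lemma card_evenFiberMaps_add_two_le (k : ℕ) :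
    #(evenFiberMaps (k + 2) α) ≤ (k + 1) * Fintype.card α * #(evenFiberMaps k α) := by
  refine (card_le_card (evenFiberMaps_add_two_subset k)).trans (card_image_le.trans ?_)
  simp [card_product, mul_assoc]

lemma card_evenFiberMaps_le (m : ℕ) :
    #(evenFiberMaps (2 * m) α) ≤ (2 * m * Fintype.card α) ^ m := by
  induction m with
  | zero => exact card_le_one.mpr fun p _ q _ => funext fun i => i.elim0
  | succ m ih =>
    calc #(evenFiberMaps (2 * m + 2) α)
        ≤ (2 * m + 1) * Fintype.card α * #(evenFiberMaps (2 * m) α) :=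
          card_evenFiberMaps_add_two_le (2 * m)
      _ ≤ 2 * (m + 1) * Fintype.card α * (2 * m * Fintype.card α) ^ m := by gcongr; omega
      _ ≤ 2 * (m + 1) * Fintype.card α * (2 * (m + 1) * Fintype.card α) ^ m := by gcongr; omega
      _ = (2 * (m + 1) * Fintype.card α) ^ (m + 1) := (pow_succ' _ _).symm

def oddFibers {k : ℕ} (p : Fin k → α) : Finset α :=
  {v | Odd #{j | p j = v}}

lemma oddFibers_eq_empty_iff {k : ℕ} (p : Fin k → α) :
    oddFibers p = ∅ ↔ p ∈ evenFiberMaps k α := by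
  simp [oddFibers, evenFiberMaps, filter_eq_empty_iff]

lemma card_oddFibers_le {k : ℕ} (p : Fin k → α) :
    #(oddFibers p) ≤ k := by
  have hsub : oddFibers p ⊆ univ.image p := fun v hv => by
    obtain ⟨j, hj⟩ := card_pos.mp (mem_filter.mp hv).2.pos
    exact mem_image.mpr ⟨j, mem_univ j, (mem_filter.mp hj).2⟩
  simpa using (card_le_card hsub).trans card_image_le

end Fibers

lemma sgn_pow (b : Bool) (c : ℕ) : sgn b ^ c = if Odd c then sgn b else 1 := by
  rcases Nat.even_or_odd c with h | h
  · cases b <;> simp [sgn, h.neg_one_pow, Nat.not_odd_iff_even.mpr h]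
  · cases b <;> simp [sgn, h.neg_one_pow, h]

lemma prod_sgn_comp_eq_chi {n k : ℕ} (x : Fin n → Bool) (p : Fin k → Fin n) :
    ∏ j, sgn (x (p j)) = chi (oddFibers p) x := by
  rw [← prod_fiberwise' univ p fun v => sgn (x v), chi, oddFibers, prod_filter]
  refine prod_congr rfl fun v _ => ?_
  rw [prod_const, sgn_pow]

lemma pow_sum_sgn_mul {n : ℕ} (x y : Fin n → Bool) (k : ℕ) :
    (∑ i, sgn (x i) * sgn (y i)) ^ k =
      ∑ p : Fin k → Fin n, chi (oddFibers p) x * chi (oddFibers p) y := by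
  rw [sum_pow', Fintype.piFinset_univ]
  refine sum_congr rfl fun p _ => ?_
  rw [prod_mul_distrib, prod_sgn_comp_eq_chi, prod_sgn_comp_eq_chi]

lemma IsDensity.sum_eq {n : ℕ} {φ : (Fin n → Bool) → ℝ} (hφ : IsDensity φ) :
    ∑ x, φ x = 2 ^ n :=
  (div_eq_one_iff_eq (by positivity)).mp hφ.2

lemma sum_mul_chi_eq_zero {n : ℕ} {φ : (Fin n → Bool) → ℝ} {S : Finset (Fin n)}
    (h : coeff φ S = 0) : ∑ x, φ x * chi S x = 0 :=
  (div_eq_zero_iff.mp h).resolve_right (by positivity)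

lemma sum_sum_mul_pow_sum_sgn_mul_eq {n k : ℕ} {φ : (Fin n → Bool) → ℝ} (hφ : IsDensity φ)
    (hkw : ∀ S ∈ lowSets n k, coeff φ S = 0) :
    ∑ x, ∑ y, φ x * φ y * (∑ i, sgn (x i) * sgn (y i)) ^ k =
      #(evenFiberMaps k (Fin n)) * 2 ^ (2 * n) := by
  calc ∑ x, ∑ y, φ x * φ y * (∑ i, sgn (x i) * sgn (y i)) ^ k
      = ∑ p : Fin k → Fin n,
          (∑ x, φ x * chi (oddFibers p) x) * ∑ y, φ y * chi (oddFibers p) y := by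
        simp_rw [sum_mul_sum, pow_sum_sgn_mul, mul_sum]
        refine ((sum_congr rfl fun x _ => sum_comm).trans sum_comm).trans
          (sum_congr rfl fun p _ => sum_congr rfl fun x _ => sum_congr rfl fun y _ => by ring)
    _ = ∑ p : Fin k → Fin n, if p ∈ evenFiberMaps k (Fin n) then 2 ^ (2 * n) else 0 := by
        refine sum_congr rfl fun p _ => ?_
        split_ifs with hp
        · rw [← oddFibers_eq_empty_iff] at hp
          simp [hp, chi, hφ.sum_eq, two_mul, pow_add]
        · have hlow : oddFibers p ∈ lowSets n k := by
            rw [← oddFibers_eq_empty_iff, ← ne_eq, ← nonempty_iff_ne_empty] at hp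
            simp only [lowSets, mem_filter, mem_univ, true_and]
            exact ⟨hp.card_pos, card_oddFibers_le p⟩
          rw [sum_mul_chi_eq_zero (hkw _ hlow), zero_mul]
    _ = #(evenFiberMaps k (Fin n)) * 2 ^ (2 * n) := by
        rw [sum_ite_mem, univ_inter, sum_const, nsmul_eq_mul]

lemma indicator_lt_abs_le_pow_div {a c : ℝ} (hc : 0 < c) {k : ℕ} (hk : Even k) :
    (if c < |a| then 1 else 0 : ℝ) ≤ a ^ k / c ^ k := by
  split_ifs with h
  · rw [one_le_div (by positivity)]
    exact (pow_le_pow_left₀ hc.le h.le k).trans_eq (hk.pow_abs a)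
  · exact div_nonneg (hk.pow_nonneg a) (by positivity)

theorem stmt16 {n kb : ℕ} (hke : Even kb) (φ : (Fin n → Bool) → ℝ)
    (hφ : IsDensity φ) (hkw : ∀ S ∈ lowSets n kb, coeff φ S = 0)
    (t : ℝ) (ht : 0 < t) :
    (∑ x : Fin n → Bool, ∑ y : Fin n → Bool, φ x * φ y *
        (if t * Real.sqrt n < |∑ i, sgn (x i) * sgn (y i)| then 1 else 0)) /
      (2 : ℝ) ^ (2 * n) ≤ (kb : ℝ) ^ (kb / 2) / t ^ kb := by
  obtain ⟨m, rfl⟩ := even_iff_two_dvd.mp hke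
  rcases n.eq_zero_or_pos with rfl | hn
  · simp only [univ_eq_empty, sum_empty, abs_zero, CharP.cast_eq_zero, Real.sqrt_zero,
      mul_zero, lt_self_iff_false, if_false, sum_const_zero, zero_div]
    positivity
  have hc : 0 < t * Real.sqrt n := by positivity
  calc (∑ x, ∑ y, φ x * φ y *
        (if t * Real.sqrt n < |∑ i, sgn (x i) * sgn (y i)| then 1 else 0)) / (2 : ℝ) ^ (2 * n)
      ≤ (∑ x, ∑ y, φ x * φ y *
          ((∑ i, sgn (x i) * sgn (y i)) ^ (2 * m) / (t * Real.sqrt n) ^ (2 * m))) /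
          (2 : ℝ) ^ (2 * n) := by
        gcongr with x _ y _
        · exact mul_nonneg (hφ.1 x) (hφ.1 y)
        · exact indicator_lt_abs_le_pow_div hc hke
    _ = #(evenFiberMaps (2 * m) (Fin n)) / (t * Real.sqrt n) ^ (2 * m) := by
        simp_rw [← mul_div_assoc, ← sum_div, sum_sum_mul_pow_sum_sgn_mul_eq hφ hkw]
        field_simp
    _ ≤ ((2 * m * n) ^ m : ℕ) / (t * Real.sqrt n) ^ (2 * m) := by
        gcongr
        simpa using card_evenFiberMaps_le m (α := Fin n)
    _ = ((2 * m : ℕ) : ℝ) ^ (2 * m / 2) / t ^ (2 * m) := by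
        rw [mul_pow t, pow_mul (Real.sqrt n), Real.sq_sqrt n.cast_nonneg,
          Nat.mul_div_cancel_left m two_pos]
        push_cast
        field_simp
        ring
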